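/- Let a, b > 0. Then limsup_{λ→∞} ( card{(m,n) ∈ ℤ_{≥0} × ℤ_{≥1} : (2m+1)²π²/(16a²) + n²π²/(4b²) ≤ λ} − (ab/π)λ − (b/π)√λ ) / √λ ≤ 0; that is, the number of such lattice points is at most (ab/π)λ + (b/π)√λ + o(√λ) as λ → ∞. -/

import Mathlib

open Filter Real Finset intervalIntegral

/-! Rescaling by `4b²/π²` turns the condition into `(κ(2m+1))² + n² ≤ R²` with `κ = b/(2a)` and
`R = 2b√λ/π`. For each `1 ≤ n ≤ R` the admissible `m` are those with `2m + 1 ≤ √(R² - n²)/κ`,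
at most `(√(R² - n²)/κ + 1)/2` of them. Summing over `n` and comparing the sum of the decreasing
function `√(R² - x²)` with its integral over `[0, R]`, a quarter disc of area `πR²/4`, bounds the
count by `πR²/(8κ) + R/2 = (ab/π)λ + (b/π)√λ`, with no error term at all. -/

theorem integral_sqrt_one_sub_sq_zero_one : ∫ x in (0 : ℝ)..1, √(1 - x ^ 2) = π / 4 := by
  have hcont : Continuous fun x : ℝ => √(1 - x ^ 2) := by fun_prop
  have hsymm : ∫ x in (-1 : ℝ)..0, √(1 - x ^ 2) = ∫ x in (0 : ℝ)..1, √(1 - x ^ 2) := by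
    have h := integral_comp_neg (a := 0) (b := 1) fun x : ℝ => √(1 - x ^ 2)
    simp only [neg_zero, even_two, Even.neg_pow] at h
    exact h.symm
  have hsplit := integral_add_adjacent_intervals
    (hcont.intervalIntegrable (μ := MeasureTheory.volume) (-1) 0) (hcont.intervalIntegrable 0 1)
  rw [hsymm, integral_sqrt_one_sub_sq] at hsplit
  linarith

theorem integral_sqrt_sq_sub_sq {R : ℝ} (hR : 0 ≤ R) :
    ∫ x in (0 : ℝ)..R, √(R ^ 2 - x ^ 2) = π / 4 * R ^ 2 := by
  have hscale (u : ℝ) : √(R ^ 2 - (R * u) ^ 2) = R * √(1 - u ^ 2) := by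
    rw [show R ^ 2 - (R * u) ^ 2 = R ^ 2 * (1 - u ^ 2) by ring, sqrt_mul (sq_nonneg R),
      sqrt_sq hR]
  have h := mul_integral_comp_mul_left (a := 0) (b := 1) (f := fun x => √(R ^ 2 - x ^ 2)) R
  simp only [hscale, mul_zero, mul_one, integral_const_mul,
    integral_sqrt_one_sub_sq_zero_one] at h
  rw [← h]
  ring

theorem sum_sqrt_sq_sub_sq_le {R : ℝ} (hR : 0 ≤ R) :
    ∑ n ∈ Icc 1 ⌊R⌋₊, √(R ^ 2 - (n : ℝ) ^ 2) ≤ π / 4 * R ^ 2 := by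
  set f : ℝ → ℝ := fun x => √(R ^ 2 - x ^ 2)
  have hanti : AntitoneOn f (Set.Icc 0 (0 + ⌊R⌋₊)) := fun x hx y _ hxy =>
    sqrt_le_sqrt (by nlinarith [hx.1])
  calc ∑ n ∈ Icc 1 ⌊R⌋₊, f n = ∑ i ∈ range ⌊R⌋₊, f (0 + ↑(i + 1)) := by
        simp only [zero_add, range_eq_Ico, sum_Ico_add' (fun n : ℕ => f n) 0 ⌊R⌋₊ 1,
          Ico_add_one_right_eq_Icc]
    _ ≤ ∫ x in (0 : ℝ)..0 + ⌊R⌋₊, f x := hanti.sum_le_integral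
    _ ≤ ∫ x in (0 : ℝ)..R, f x := by
        rw [zero_add]
        exact integral_mono_interval le_rfl (Nat.cast_nonneg _) (Nat.floor_le hR)
          (.of_forall fun x => sqrt_nonneg _) ((by fun_prop : Continuous f).intervalIntegrable _ _)
    _ = π / 4 * R ^ 2 := integral_sqrt_sq_sub_sq hR

theorem natCard_le_sum_of_forall_lt {S : Set (ℕ × ℕ)} {s : Finset ℕ} {K : ℕ → ℕ}
    (hS : ∀ p ∈ S, p.2 ∈ s ∧ p.1 < K p.2) : Nat.card S ≤ ∑ n ∈ s, K n := by
  set T := s.biUnion fun n => (range (K n)).image fun m => (m, n)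
  have hST : S ⊆ T := fun p hp => by
    obtain ⟨hs, hK⟩ := hS p hp
    exact mem_biUnion.2 ⟨p.2, hs, mem_image.2 ⟨p.1, mem_range.2 hK, rfl⟩⟩
  calc Nat.card S = S.ncard := Nat.card_coe_set_eq S
    _ ≤ (T : Set (ℕ × ℕ)).ncard := Set.ncard_le_ncard hST T.finite_toSet
    _ = T.card := Set.ncard_coe_finset T
    _ ≤ ∑ n ∈ s, K n := card_biUnion_le.trans <| sum_le_sum fun n _ =>
        card_image_le.trans (card_range _).le

theorem natCard_odd_ellipse_le {κ R : ℝ} (hκ : 0 < κ) (hR : 0 ≤ R) :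
    (Nat.card {p : ℕ × ℕ | 1 ≤ p.2 ∧ (κ * (2 * p.1 + 1)) ^ 2 + (p.2 : ℝ) ^ 2 ≤ R ^ 2} : ℝ)
      ≤ π / (8 * κ) * R ^ 2 + R / 2 := by
  set y : ℕ → ℝ := fun n => √(R ^ 2 - (n : ℝ) ^ 2) / κ
  have hmem : ∀ p ∈ {p : ℕ × ℕ | 1 ≤ p.2 ∧ (κ * (2 * p.1 + 1)) ^ 2 + (p.2 : ℝ) ^ 2 ≤ R ^ 2},
      p.2 ∈ Icc 1 ⌊R⌋₊ ∧ p.1 < ⌊(y p.2 + 1) / 2⌋₊ := by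
    rintro ⟨m, n⟩ ⟨hn, hmn⟩
    have hodd : 2 * (m : ℝ) + 1 ≤ y n := by
      rw [le_div_iff₀ hκ, mul_comm]
      exact le_sqrt_of_sq_le (by linarith)
    refine ⟨mem_Icc.2 ⟨hn, Nat.le_floor ?_⟩, Nat.le_floor ?_⟩
    · nlinarith [sq_nonneg (κ * (2 * (m : ℝ) + 1)), n.cast_nonneg (α := ℝ)]
    · push_cast
      linarith
  calc (Nat.card _ : ℝ) ≤ ((∑ n ∈ Icc 1 ⌊R⌋₊, ⌊(y n + 1) / 2⌋₊ : ℕ) : ℝ) :=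
        Nat.cast_le.2 (natCard_le_sum_of_forall_lt hmem)
    _ = ∑ n ∈ Icc 1 ⌊R⌋₊, (⌊(y n + 1) / 2⌋₊ : ℝ) := Nat.cast_sum _ _
    _ ≤ ∑ n ∈ Icc 1 ⌊R⌋₊, (y n + 1) / 2 :=
        sum_le_sum fun n _ => Nat.floor_le (by positivity)
    _ = (∑ n ∈ Icc 1 ⌊R⌋₊, √(R ^ 2 - (n : ℝ) ^ 2)) / (2 * κ) + ⌊R⌋₊ / 2 := by
        simp only [y, ← sum_div, sum_add_distrib, sum_const, Nat.card_Icc, nsmul_one]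
        field_simp
        push_cast
        ring
    _ ≤ π / 4 * R ^ 2 / (2 * κ) + R / 2 := by
        gcongr
        exacts [sum_sqrt_sq_sub_sq_le hR, Nat.floor_le hR]
    _ = π / (8 * κ) * R ^ 2 + R / 2 := by
        field_simp
        ring

theorem lattice_count_le {a b lam : ℝ} (ha : 0 < a) (hb : 0 < b) (hlam : 0 ≤ lam) :
    (Nat.card {p : ℕ × ℕ | 1 ≤ p.2 ∧ (2 * (p.1 : ℝ) + 1) ^ 2 * π ^ 2 / (16 * a ^ 2)
        + (p.2 : ℝ) ^ 2 * π ^ 2 / (4 * b ^ 2) ≤ lam} : ℝ)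
      ≤ a * b / π * lam + b / π * √lam := by
  have hR2 : (2 * b * √lam / π) ^ 2 = 4 * b ^ 2 / π ^ 2 * lam := by
    rw [div_pow, mul_pow, sq_sqrt hlam]
    ring
  have hscale (x y : ℝ) : (b / (2 * a) * x) ^ 2 + y ^ 2
      = 4 * b ^ 2 / π ^ 2 * (x ^ 2 * π ^ 2 / (16 * a ^ 2) + y ^ 2 * π ^ 2 / (4 * b ^ 2)) := by
    field_simp
    ring
  have hset : {p : ℕ × ℕ | 1 ≤ p.2 ∧ (2 * (p.1 : ℝ) + 1) ^ 2 * π ^ 2 / (16 * a ^ 2)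
        + (p.2 : ℝ) ^ 2 * π ^ 2 / (4 * b ^ 2) ≤ lam}
      = {p : ℕ × ℕ | 1 ≤ p.2 ∧ (b / (2 * a) * (2 * p.1 + 1)) ^ 2 + (p.2 : ℝ) ^ 2
        ≤ (2 * b * √lam / π) ^ 2} := by
    ext p
    simp only [Set.mem_ofPred_eq, hscale, hR2,
      mul_le_mul_iff_right₀ (by positivity : (0 : ℝ) < 4 * b ^ 2 / π ^ 2)]
  calc _ ≤ π / (8 * (b / (2 * a))) * (2 * b * √lam / π) ^ 2 + 2 * b * √lam / π / 2 := by
        rw [hset]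
        exact natCard_odd_ellipse_le (by positivity) (by positivity)
    _ = a * b / π * lam + b / π * √lam := by
        rw [hR2]
        field_simp
        ring

/-- Upper bound for counting lattice points `(m,n)`, `m ≥ 0`, `n ≥ 1`, with
`(2m+1)²π²/(16a²) + n²π²/(4b²) ≤ λ`: the count is at most
`(ab/π)λ + (b/π)√λ + o(√λ)` as `λ → ∞`. -/
theorem lattice_count_mixed_upper (a b : ℝ) (ha : 0 < a) (hb : 0 < b) :
    ∀ ε > 0, ∀ᶠ (lam : ℝ) in atTop,
      ((Nat.card {p : ℕ × ℕ | 1 ≤ p.2 ∧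
          (2 * (p.1 : ℝ) + 1) ^ 2 * π ^ 2 / (16 * a ^ 2)
            + (p.2 : ℝ) ^ 2 * π ^ 2 / (4 * b ^ 2) ≤ lam} : ℝ))
        ≤ a * b / π * lam + b / π * Real.sqrt lam + ε * Real.sqrt lam := by
  intro ε hε
  filter_upwards [eventually_ge_atTop 0] with lam hlam
  linarith [lattice_count_le ha hb hlam, mul_nonneg hε.le (sqrt_nonneg lam)]
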